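/- arXiv:1904.04131 — 2 statements merged into one kernel-verified Lean document; each statement's English description precedes it below -/
import Mathlib

section
/- Let G be a finite connected graph and let {F_1, …, F_k} be a c-partition of E(G) (a partition of E(G) such that every Θ*-class is contained in some F_i). For each i let G_i = G/F_i be the quotient graph and let ℓ_i(u) denote the connected component of G − F_i containing the vertex u. Then for any two vertices u, v ∈ V(G), the distance satisfies d_G(u,v) = Σ_{i=1}^{k} d_{G_i}(ℓ_i(u), ℓ_i(v)). -/
open SimpleGraph

noncomputable section

/-- The Djoković–Winkler relation `Θ` on the edges of a graph `G`:
edges `e = xy` and `f = ab` are related iff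
`d(x,a) + d(y,b) ≠ d(x,b) + d(y,a)`. -/
def theta {V : Type*} (G : SimpleGraph V) (e f : Sym2 V) : Prop :=
  e ∈ G.edgeSet ∧ f ∈ G.edgeSet ∧
    ∃ x y a b : V, e = s(x, y) ∧ f = s(a, b) ∧
      G.dist x a + G.dist y b ≠ G.dist x b + G.dist y a

/-- The quotient graph `G/F`: its vertices are the connected components of
`G − F`, two components being adjacent iff some vertex of one is adjacent in
`G` to some vertex of the other. -/
def quotientGraph {V : Type*} (G : SimpleGraph V) (F : Set (Sym2 V)) :
    SimpleGraph (G.deleteEdges F).ConnectedComponent where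
  Adj X Y := X ≠ Y ∧ ∃ x y : V,
    (G.deleteEdges F).connectedComponentMk x = X ∧
    (G.deleteEdges F).connectedComponentMk y = Y ∧ G.Adj x y
  symm := by
    constructor
    rintro X Y ⟨hne, x, y, hx, hy, hadj⟩
    exact ⟨hne.symm, y, x, hy, hx, hadj.symm⟩
  loopless := by
    constructor
    rintro X ⟨hne, -⟩
    exact hne rfl

/-- `F₁, …, F_k` is a partition of the edge set of `G`. -/
def IsEdgePartition {V : Type*} (G : SimpleGraph V) {k : ℕ}
    (F : Fin k → Set (Sym2 V)) : Prop :=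
  (∀ i, F i ⊆ G.edgeSet) ∧ (∀ e ∈ G.edgeSet, ∃ i, e ∈ F i) ∧
    (∀ i j, i ≠ j → Disjoint (F i) (F j))

/-- `F₁, …, F_k` is a c-partition of the edge set of `G`: a partition such
that every `Θ*`-class (class of the transitive closure of `Θ`) is contained
in some part. -/
def IsCPartition {V : Type*} (G : SimpleGraph V) {k : ℕ}
    (F : Fin k → Set (Sym2 V)) : Prop :=
  IsEdgePartition G F ∧
    ∀ e f : Sym2 V, Relation.TransGen (theta G) e f → ∀ i, e ∈ F i → f ∈ F i

/-- For an edge `e = uv`, `nW G w u v` is `n_u(e|(G,w))`, the sum of the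
weights of the vertices strictly closer to `u` than to `v`. -/
def nW {V : Type*} (G : SimpleGraph V) (w : V → NNReal) (u v : V) : NNReal :=
  ∑ᶠ x ∈ {x : V | G.dist x u < G.dist x v}, w x

/-- The Mostar index of a vertex-edge-weighted graph `(G, w, w')`. -/
def MostarW {V : Type*} (G : SimpleGraph V) (w : V → NNReal)
    (w' : Sym2 V → NNReal) : ℝ :=
  ∑ᶠ e ∈ G.edgeSet, (w' e : ℝ) *
    Sym2.lift ⟨fun u v => |((nW G w u v : ℝ)) - ((nW G w v u : ℝ))|,
      fun _ _ => abs_sub_comm _ _⟩ e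

/-- The (unweighted) Mostar index of a graph `G`. -/
def Mostar {V : Type*} (G : SimpleGraph V) : ℝ :=
  ∑ᶠ e ∈ G.edgeSet,
    Sym2.lift ⟨fun u v =>
      |((Nat.card {x : V | G.dist x u < G.dist x v} : ℝ)) -
        ((Nat.card {x : V | G.dist x v < G.dist x u} : ℝ))|,
      fun _ _ => abs_sub_comm _ _⟩ e

/-!
Fix a shortest `u`–`v` walk `p`. Every walk from `x` to `y` in `G` projects to a walk in `G/F`
whose length is at most the number of its edges in `F`, and conversely every walk in `G/F` lifts
to a walk in `G` with at most that many edges in `F`. Hence `d_{G/F}(ℓ(u), ℓ(v))` is the least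
number of `F`-edges on a `u`–`v` walk. When `F` is a union of `Θ*`-classes, the shortest walk `p`
attains this minimum, by a double count of `d(a,y) + d(b,x) - d(a,x) - d(b,y)` over pairs of darts
`(a,b)` of `p` and `(x,y)` of another walk: this quantity vanishes unless the two edges are in
relation `Θ`. Summing over the parts of the c-partition, the `F_i`-edge counts of `p` add up to
its length `d(u,v)`.
-/

open scoped Classical

namespace SimpleGraph.Walk

variable {V : Type*} {G : SimpleGraph V}

def numEdgesIn (F : Set (Sym2 V)) {u v : V} (p : G.Walk u v) : ℕ :=
  p.edges.countP (· ∈ F)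

variable (F : Set (Sym2 V))

@[simp]
lemma numEdgesIn_nil {u : V} : (nil : G.Walk u u).numEdgesIn F = 0 := rfl

lemma numEdgesIn_cons {u v w : V} (h : G.Adj u v) (p : G.Walk v w) :
    (cons h p).numEdgesIn F = p.numEdgesIn F + if s(u, v) ∈ F then 1 else 0 := by
  simp [numEdgesIn, List.countP_cons]

lemma numEdgesIn_append {u v w : V} (p : G.Walk u v) (q : G.Walk v w) :
    (p.append q).numEdgesIn F = p.numEdgesIn F + q.numEdgesIn F := by
  simp [numEdgesIn, edges_append, List.countP_append]

lemma numEdgesIn_eq_zero_iff {u v : V} (p : G.Walk u v) :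
    p.numEdgesIn F = 0 ↔ ∀ e ∈ p.edges, e ∉ F := by
  simp [numEdgesIn, List.countP_eq_zero]

lemma sum_darts_ite_mem {M : Type*} [AddCommMonoid M] (c : M) {u v : V} (p : G.Walk u v) :
    (p.darts.map fun d => if d.edge ∈ F then c else 0).sum = p.numEdgesIn F • c := by
  induction p with
  | nil => simp
  | cons h p ih =>
    rw [darts_cons, List.map_cons, List.sum_cons, ih, numEdgesIn_cons, Dart.edge_mk]
    split_ifs <;> simp [add_smul, add_comm]

lemma sum_numEdgesIn_eq_length {k : ℕ} {F : Fin k → Set (Sym2 V)} (hF : IsEdgePartition G F)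
    {u v : V} (p : G.Walk u v) : ∑ i, p.numEdgesIn (F i) = p.length := by
  induction p with
  | nil => simp
  | @cons u w v h p ih =>
    obtain ⟨j, hj⟩ := hF.2.1 s(u, w) h
    have hpart : ∀ i, s(u, w) ∈ F i ↔ i = j := fun i =>
      ⟨fun hi => by_contra fun hij => Set.disjoint_left.mp (hF.2.2 i j hij) hi hj,
        fun hij => hij ▸ hj⟩
    simp [numEdgesIn_cons, Finset.sum_add_distrib, ih, hpart]

lemma sum_darts_sub {M : Type*} [AddCommGroup M] (f : V → M) {u v : V} (p : G.Walk u v) :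
    (p.darts.map fun d => f d.snd - f d.fst).sum = f v - f u := by
  induction p with
  | nil => simp
  | cons h p ih => simp only [darts_cons, List.map_cons, List.sum_cons, ih]; abel

lemma exists_length_eq_of_mem_darts {u v : V} (p : G.Walk u v) {d : G.Dart}
    (hd : d ∈ p.darts) :
    ∃ (r₁ : G.Walk u d.fst) (r₂ : G.Walk d.snd v), r₁.length + 1 + r₂.length = p.length := by
  induction p with
  | nil => simp at hd
  | cons h p ih =>
    rcases List.mem_cons.mp hd with rfl | hd
    · exact ⟨nil, p, by simp [add_comm]⟩
    · obtain ⟨r₁, r₂, hr⟩ := ih hd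
      exact ⟨cons h r₁, r₂, by simp [← hr]; ring⟩

lemma dist_of_mem_darts_of_length_eq_dist (hG : G.Connected) {u v : V} {p : G.Walk u v}
    (hp : p.length = G.dist u v) {d : G.Dart} (hd : d ∈ p.darts) :
    G.dist u d.snd = G.dist u d.fst + 1 ∧ G.dist d.fst v = G.dist d.snd v + 1 := by
  obtain ⟨r₁, r₂, hr⟩ := p.exists_length_eq_of_mem_darts hd
  have h₁ := dist_le r₁
  have h₂ := dist_le r₂
  have hab := dist_eq_one_iff_adj.mpr d.adj
  have t₁ : G.dist u d.snd ≤ G.dist u d.fst + G.dist d.fst d.snd := hG.dist_triangle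
  have t₂ : G.dist u v ≤ G.dist u d.snd + G.dist d.snd v := hG.dist_triangle
  have t₃ : G.dist d.fst v ≤ G.dist d.fst d.snd + G.dist d.snd v := hG.dist_triangle
  have t₄ : G.dist u v ≤ G.dist u d.fst + G.dist d.fst v := hG.dist_triangle
  omega

end SimpleGraph.Walk

section Theta

variable {V : Type*} {G : SimpleGraph V}

def thetaDefect (G : SimpleGraph V) (d₁ d₂ : G.Dart) : ℤ :=
  G.dist d₁.fst d₂.snd + G.dist d₁.snd d₂.fst - G.dist d₁.fst d₂.fst - G.dist d₁.snd d₂.snd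

lemma thetaDefect_comm (d₁ d₂ : G.Dart) : thetaDefect G d₁ d₂ = thetaDefect G d₂ d₁ := by
  simp only [thetaDefect, dist_comm (u := d₁.fst), dist_comm (u := d₁.snd)]
  ring

lemma theta_of_thetaDefect_ne_zero {d₁ d₂ : G.Dart} (h : thetaDefect G d₁ d₂ ≠ 0) :
    theta G d₁.edge d₂.edge :=
  ⟨d₁.edge_mem, d₂.edge_mem, d₁.fst, d₁.snd, d₂.fst, d₂.snd, rfl, rfl,
    fun h' => h (by simp only [thetaDefect]; omega)⟩

lemma SimpleGraph.Walk.sum_thetaDefect {u v : V} (d : G.Dart) (w : G.Walk u v) :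
    (w.darts.map (thetaDefect G d)).sum =
      ((G.dist d.fst v : ℤ) - G.dist d.snd v) - ((G.dist d.fst u : ℤ) - G.dist d.snd u) := by
  rw [← w.sum_darts_sub fun z => (G.dist d.fst z : ℤ) - G.dist d.snd z]
  refine congrArg _ (List.map_congr_left fun d' _ => ?_)
  simp only [thetaDefect]
  ring

lemma SimpleGraph.Walk.sum_thetaDefect_le_two (hG : G.Connected) {u v : V} (d : G.Dart)
    (w : G.Walk u v) : (w.darts.map (thetaDefect G d)).sum ≤ 2 := by
  have h₁ := dist_eq_one_iff_adj.mpr d.adj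
  have h₂ := dist_eq_one_iff_adj.mpr d.adj.symm
  have t₁ : G.dist d.fst v ≤ G.dist d.fst d.snd + G.dist d.snd v := hG.dist_triangle
  have t₂ : G.dist d.snd u ≤ G.dist d.snd d.fst + G.dist d.fst u := hG.dist_triangle
  rw [w.sum_thetaDefect]
  omega

lemma SimpleGraph.Walk.sum_thetaDefect_eq_two (hG : G.Connected) {u v : V} {p : G.Walk u v}
    (hp : p.length = G.dist u v) {d : G.Dart} (hd : d ∈ p.darts) (w : G.Walk u v) :
    (w.darts.map (thetaDefect G d)).sum = 2 := by
  obtain ⟨h₁, h₂⟩ := Walk.dist_of_mem_darts_of_length_eq_dist hG hp hd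
  rw [w.sum_thetaDefect, dist_comm (u := d.fst) (v := u), dist_comm (u := d.snd) (v := u)]
  omega

def IsThetaClosed (G : SimpleGraph V) (F : Set (Sym2 V)) : Prop :=
  ∀ e f, theta G e f → e ∈ F → f ∈ F

lemma IsCPartition.isThetaClosed {k : ℕ} {F : Fin k → Set (Sym2 V)} (hF : IsCPartition G F)
    (i : Fin k) : IsThetaClosed G (F i) :=
  fun e f h => hF.2 e f (.single h) i

lemma IsThetaClosed.ite_mem_thetaDefect {F : Set (Sym2 V)} (hF : IsThetaClosed G F)
    (d₁ d₂ : G.Dart) :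
    (if d₁.edge ∈ F then thetaDefect G d₁ d₂ else 0) =
      if d₂.edge ∈ F then thetaDefect G d₁ d₂ else 0 := by
  by_cases h : thetaDefect G d₁ d₂ = 0
  · simp [h]
  have hmem : d₁.edge ∈ F ↔ d₂.edge ∈ F :=
    ⟨hF _ _ (theta_of_thetaDefect_ne_zero h),
      hF _ _ (theta_of_thetaDefect_ne_zero (thetaDefect_comm d₁ d₂ ▸ h))⟩
  simp only [hmem]

/-- Double counting `∑_{d₁ ∈ p, d₂ ∈ w} [d₁ ∈ F] δ(d₁, d₂)`: by rows it is `2 |p ∩ F|`, and since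
`[d₁ ∈ F] δ = [d₂ ∈ F] δ` for Θ-closed `F`, by columns it is at most `2 |w ∩ F|`. -/
lemma SimpleGraph.Walk.numEdgesIn_le_of_length_eq_dist (hG : G.Connected) {F : Set (Sym2 V)}
    (hF : IsThetaClosed G F) {u v : V} {p : G.Walk u v} (hp : p.length = G.dist u v)
    (w : G.Walk u v) : p.numEdgesIn F ≤ w.numEdgesIn F := by
  suffices (p.numEdgesIn F • 2 : ℤ) ≤ w.numEdgesIn F • 2 by simpa using this
  calc (p.numEdgesIn F • 2 : ℤ)
      = (p.darts.map fun d₁ => if d₁.edge ∈ F then 2 else 0).sum := (p.sum_darts_ite_mem F 2).symm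
    _ = (p.darts.map fun d₁ =>
          (w.darts.map fun d₂ => if d₁.edge ∈ F then thetaDefect G d₁ d₂ else 0).sum).sum := by
        refine congrArg _ (List.map_congr_left fun d₁ hd₁ => ?_)
        by_cases h : d₁.edge ∈ F
        · simp only [h, if_true]
          exact (Walk.sum_thetaDefect_eq_two hG hp hd₁ w).symm
        · simp [h]
    _ = (w.darts.map fun d₂ =>
          (p.darts.map fun d₁ => if d₁.edge ∈ F then thetaDefect G d₁ d₂ else 0).sum).sum := by
        simpa using Multiset.sum_map_sum_map (p.darts : Multiset G.Dart) (w.darts : Multiset G.Dart)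
    _ = (w.darts.map fun d₂ =>
          if d₂.edge ∈ F then (p.darts.map (thetaDefect G d₂)).sum else 0).sum := by
        refine congrArg _ (List.map_congr_left fun d₂ _ => ?_)
        simp only [hF.ite_mem_thetaDefect]
        by_cases h : d₂.edge ∈ F <;> simp [h, thetaDefect_comm _ d₂]
    _ ≤ (w.darts.map fun d₂ => if d₂.edge ∈ F then 2 else 0).sum := by
        refine List.sum_le_sum fun d₂ _ => ?_
        split_ifs
        · exact p.sum_thetaDefect_le_two hG d₂
        · rfl
    _ = w.numEdgesIn F • 2 := w.sum_darts_ite_mem F 2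

end Theta

section Quotient

variable {V : Type*} {G : SimpleGraph V} (F : Set (Sym2 V))

lemma exists_walk_numEdgesIn_eq_zero {x y : V} (h : (G.deleteEdges F).Reachable x y) :
    ∃ p : G.Walk x y, p.numEdgesIn F = 0 := by
  obtain ⟨p⟩ := h
  have hp : ∀ e ∈ p.edges, e ∈ G.edgeSet \ F := fun e he =>
    edgeSet_deleteEdges F ▸ p.edges_subset_edgeSet he
  refine ⟨p.transfer G fun e he => (hp e he).1, ?_⟩
  rw [Walk.numEdgesIn_eq_zero_iff, Walk.edges_transfer]
  exact fun e he => (hp e he).2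

lemma quotientGraph_adj_of_adj {x y : V} (h : G.Adj x y)
    (hne : (G.deleteEdges F).connectedComponentMk x ≠ (G.deleteEdges F).connectedComponentMk y) :
    (quotientGraph G F).Adj ((G.deleteEdges F).connectedComponentMk x)
      ((G.deleteEdges F).connectedComponentMk y) :=
  ⟨hne, x, y, rfl, rfl, h⟩

lemma exists_quotientGraph_walk_length_le_numEdgesIn {x y : V} (p : G.Walk x y) :
    ∃ q : (quotientGraph G F).Walk ((G.deleteEdges F).connectedComponentMk x)
      ((G.deleteEdges F).connectedComponentMk y), q.length ≤ p.numEdgesIn F := by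
  induction p with
  | nil => exact ⟨.nil, by simp⟩
  | @cons x w y h p ih =>
    obtain ⟨q, hq⟩ := ih
    rw [Walk.numEdgesIn_cons]
    by_cases hxw : (G.deleteEdges F).connectedComponentMk x =
        (G.deleteEdges F).connectedComponentMk w
    · rw [hxw]
      exact ⟨q, by omega⟩
    · have hmem : s(x, w) ∈ F := by_contra fun hxw' =>
        hxw (ConnectedComponent.connectedComponentMk_eq_of_adj (deleteEdges_adj.mpr ⟨h, hxw'⟩))
      refine ⟨.cons (quotientGraph_adj_of_adj F h hxw) q, ?_⟩
      simp only [Walk.length_cons, hmem, if_true]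
      omega

lemma exists_walk_numEdgesIn_le_length {X Y : (G.deleteEdges F).ConnectedComponent}
    (q : (quotientGraph G F).Walk X Y) {x y : V} (hx : (G.deleteEdges F).connectedComponentMk x = X)
    (hy : (G.deleteEdges F).connectedComponentMk y = Y) :
    ∃ p : G.Walk x y, p.numEdgesIn F ≤ q.length := by
  induction q generalizing x with
  | nil =>
    obtain ⟨p, hp⟩ := exists_walk_numEdgesIn_eq_zero F (ConnectedComponent.exact (hx.trans hy.symm))
    exact ⟨p, hp.le⟩
  | cons h q ih =>
    obtain ⟨-, a, b, ha, hb, hab⟩ := id h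
    obtain ⟨r, hr⟩ := exists_walk_numEdgesIn_eq_zero F (ConnectedComponent.exact (hx.trans ha.symm))
    obtain ⟨p, hp⟩ := ih hb hy
    refine ⟨r.append (.cons hab p), ?_⟩
    rw [Walk.numEdgesIn_append, Walk.numEdgesIn_cons, hr, Walk.length_cons]
    split_ifs <;> omega

lemma SimpleGraph.Walk.numEdgesIn_eq_quotientGraph_dist (hG : G.Connected)
    (hF : IsThetaClosed G F) {u v : V} {p : G.Walk u v} (hp : p.length = G.dist u v) :
    p.numEdgesIn F = (quotientGraph G F).dist ((G.deleteEdges F).connectedComponentMk u)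
      ((G.deleteEdges F).connectedComponentMk v) := by
  obtain ⟨q, hq⟩ := exists_quotientGraph_walk_length_le_numEdgesIn F p
  obtain ⟨q₀, hq₀⟩ := q.reachable.exists_walk_length_eq_dist
  obtain ⟨w, hw⟩ := exists_walk_numEdgesIn_le_length F q₀ rfl rfl
  have := numEdgesIn_le_of_length_eq_dist hG hF hp w
  have := dist_le q
  omega

end Quotient

theorem dist_eq_sum_quotient_dist_general {V : Type*} (G : SimpleGraph V)
    (hG : G.Connected) {k : ℕ} (F : Fin k → Set (Sym2 V))
    (hF : IsCPartition G F) (u v : V) :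
    G.dist u v = ∑ i : Fin k, (quotientGraph G (F i)).dist
      ((G.deleteEdges (F i)).connectedComponentMk u)
      ((G.deleteEdges (F i)).connectedComponentMk v) := by
  obtain ⟨p, hp⟩ := hG.exists_walk_length_eq_dist u v
  rw [← hp, ← p.sum_numEdgesIn_eq_length hF.1]
  exact Finset.sum_congr rfl fun i _ =>
    p.numEdgesIn_eq_quotientGraph_dist (F i) hG (hF.isThetaClosed i) hp

/-- for a c-partition `{F₁, …, F_k}` of the edge set of a finite
connected graph `G`, the distance in `G` is the sum of the distances between
the corresponding components in the quotient graphs `G_i = G/F_i`. -/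
theorem dist_eq_sum_quotient_dist {V : Type*} [Fintype V] (G : SimpleGraph V)
    (hG : G.Connected) {k : ℕ} (F : Fin k → Set (Sym2 V))
    (hF : IsCPartition G F) (u v : V) :
    G.dist u v = ∑ i : Fin k, (quotientGraph G (F i)).dist
      ((G.deleteEdges (F i)).connectedComponentMk u)
      ((G.deleteEdges (F i)).connectedComponentMk v) :=
  dist_eq_sum_quotient_dist_general G hG F hF u v
end
end

section
/- Let G be a finite connected graph and let {F_1, …, F_k} be a c-partition of E(G). If e = uv ∈ F_i, then U = ℓ_i(u) and V = ℓ_i(v) are distinct connected components of G − F_i and they are adjacent vertices in the quotient graph G_i = G/F_i. -/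
open SimpleGraph

noncomputable section

namespace SimpleGraph

variable {V : Type*} {G : SimpleGraph V} {u v x y : V}

lemma Reachable.apply_eq_of_forall_adj {α : Type*} {f : V → α}
    (hf : ∀ x y, G.Adj x y → f x = f y) (h : G.Reachable u v) : f u = f v := by
  rw [reachable_iff_reflTransGen] at h
  simpa [Relation.reflTransGen_eq_self] using h.lift f hf

lemma dist_sub_dist_eq_of_not_theta (hxy : G.Adj x y) (huv : G.Adj u v)
    (h : ¬ theta G s(u, v) s(x, y)) :
    (G.dist u x : ℤ) - G.dist v x = (G.dist u y : ℤ) - G.dist v y := by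
  have hdist : G.dist u x + G.dist v y = G.dist u y + G.dist v x := by
    by_contra hne
    exact h ⟨huv, hxy, u, v, x, y, rfl, rfl, hne⟩
  omega

/-- If the edges in `Θ`-relation with `uv` all lie in `F`, then `G − F` separates `u` from `v`:
`x ↦ d(u, x) - d(v, x)` is constant along the edges of `G − F`, yet it is `-1` at `u` and `1` at
`v`. -/
lemma not_reachable_deleteEdges_of_theta_subset {F : Set (Sym2 V)} (huv : G.Adj u v)
    (hF : ∀ f, theta G s(u, v) f → f ∈ F) : ¬ (G.deleteEdges F).Reachable u v := by
  intro hreach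
  have hconst := hreach.apply_eq_of_forall_adj (f := fun x ↦ (G.dist u x : ℤ) - G.dist v x)
    fun x y hxy ↦ by
      rw [deleteEdges_adj] at hxy
      exact dist_sub_dist_eq_of_not_theta hxy.1 huv fun hθ ↦ hxy.2 (hF _ hθ)
  have h1 : G.dist u v = 1 := dist_eq_one_iff_adj.mpr huv
  have h2 : G.dist v u = 1 := dist_eq_one_iff_adj.mpr huv.symm
  simp only [dist_self, h1, h2] at hconst
  omega

end SimpleGraph

theorem components_adj_in_quotient_general {V : Type*} (G : SimpleGraph V)
    {k : ℕ} (F : Fin k → Set (Sym2 V))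
    (hF : IsCPartition G F) (i : Fin k) (u v : V) (he : s(u, v) ∈ F i) :
    (G.deleteEdges (F i)).connectedComponentMk u ≠
        (G.deleteEdges (F i)).connectedComponentMk v ∧
      (quotientGraph G (F i)).Adj
        ((G.deleteEdges (F i)).connectedComponentMk u)
        ((G.deleteEdges (F i)).connectedComponentMk v) := by
  have huv : G.Adj u v := hF.1.1 i he
  have hne : (G.deleteEdges (F i)).connectedComponentMk u ≠
      (G.deleteEdges (F i)).connectedComponentMk v := fun h ↦
    not_reachable_deleteEdges_of_theta_subset huv
      (fun f hθ ↦ hF.2 _ f (.single hθ) i he) (ConnectedComponent.exact h)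
  exact ⟨hne, hne, u, v, rfl, rfl, huv⟩

/-- if `{F₁, …, F_k}` is a c-partition of the edge set of a finite
connected graph `G` and `e = uv ∈ F_i`, then the components `U = ℓ_i(u)` and
`V = ℓ_i(v)` of `G − F_i` are distinct and adjacent in the quotient graph
`G_i = G/F_i`. -/
theorem components_adj_in_quotient {V : Type*} [Fintype V] (G : SimpleGraph V)
    (hG : G.Connected) {k : ℕ} (F : Fin k → Set (Sym2 V))
    (hF : IsCPartition G F) (i : Fin k) (u v : V) (he : s(u, v) ∈ F i) :
    (G.deleteEdges (F i)).connectedComponentMk u ≠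
        (G.deleteEdges (F i)).connectedComponentMk v ∧
      (quotientGraph G (F i)).Adj
        ((G.deleteEdges (F i)).connectedComponentMk u)
        ((G.deleteEdges (F i)).connectedComponentMk v) :=
  components_adj_in_quotient_general G F hF i u v he
end
end
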